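/- arXiv:2201.11816 — 6 statements merged into one kernel-verified Lean document; each statement's English description precedes it below -/
import Mathlib

section
/- For any real numbers ρ_min > 0 and ρe_min > 0, the generalized admissible set A(ρ_min, ρe_min) := {(ρ, m, E) ∈ ℝ × ℝ² × ℝ : ρ ≥ ρ_min and E − ‖m‖²/(2ρ) ≥ ρe_min} is a convex subset of ℝ × ℝ² × ℝ. -/
/-- States of the 2D compressible flow equations: `u = (ρ, m, E)`. -/
abbrev State : Type := ℝ × EuclideanSpace ℝ (Fin 2) × ℝ

/-- The internal energy `ρe(u) = E - ‖m‖²/(2ρ)`. -/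
noncomputable def internalEnergy (u : State) : ℝ :=
  u.2.2 - ‖u.2.1‖ ^ 2 / (2 * u.1)

/-- For positive lower bounds `ρmin, ρemin`, the generalized admissible set
`A(ρmin, ρemin) = {u | ρ ≥ ρmin ∧ ρe(u) ≥ ρemin}` is convex. -/
theorem generalizedAdmissibleSet_convex (ρmin ρemin : ℝ)
    (hρ : 0 < ρmin) (hρe : 0 < ρemin) :
    Convex ℝ {u : State | ρmin ≤ u.1 ∧ ρemin ≤ internalEnergy u} := by
  rintro ⟨ρ₁, m₁, E₁⟩ ⟨h1ρ, h1e⟩ ⟨ρ₂, m₂, E₂⟩ ⟨h2ρ, h2e⟩ a b ha hb hab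
  have hρ₁ : 0 < ρ₁ := lt_of_lt_of_le hρ h1ρ
  have hρ₂ : 0 < ρ₂ := lt_of_lt_of_le hρ h2ρ
  simp only [Set.mem_setOf_eq, internalEnergy, Prod.smul_fst, Prod.smul_snd,
    Prod.fst_add, Prod.snd_add, smul_eq_mul] at *
  have hD : 0 < a * ρ₁ + b * ρ₂ := by nlinarith
  constructor
  · nlinarith
  · set N : ℝ := ‖a • m₁ + b • m₂‖ with hNdef
    set A : ℝ := ‖m₁‖ with hAdef
    set B : ℝ := ‖m₂‖ with hBdef
    have hN0 : 0 ≤ N := norm_nonneg _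
    have hA0 : 0 ≤ A := norm_nonneg _
    have hB0 : 0 ≤ B := norm_nonneg _
    have hN : N ≤ a * A + b * B := by
      calc N ≤ ‖a • m₁‖ + ‖b • m₂‖ := norm_add_le _ _
        _ = a * A + b * B := by
            rw [norm_smul, norm_smul, Real.norm_eq_abs, Real.norm_eq_abs,
              abs_of_nonneg ha, abs_of_nonneg hb]
    have hNsq : N ^ 2 ≤ (a * A + b * B) ^ 2 := by nlinarith
    have key : N ^ 2 / (2 * (a * ρ₁ + b * ρ₂)) ≤
        a * A ^ 2 / (2 * ρ₁) + b * B ^ 2 / (2 * ρ₂) := by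
      rw [div_add_div _ _ (by positivity) (by positivity),
        div_le_div_iff₀ (by positivity) (by positivity)]
      nlinarith [mul_le_mul_of_nonneg_right hNsq
          (by positivity : (0:ℝ) ≤ 2 * ρ₁ * (2 * ρ₂)),
        mul_nonneg (mul_nonneg ha hb) (sq_nonneg (A * ρ₂ - B * ρ₁))]
    have h1 : a * ρemin ≤ a * (E₁ - A ^ 2 / (2 * ρ₁)) := by
      exact mul_le_mul_of_nonneg_left h1e ha
    have h2 : b * ρemin ≤ b * (E₂ - B ^ 2 / (2 * ρ₂)) := by
      exact mul_le_mul_of_nonneg_left h2e hb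
    have ha1 : a * (E₁ - A ^ 2 / (2 * ρ₁)) = a * E₁ - a * A ^ 2 / (2 * ρ₁) := by ring
    have hb1 : b * (E₂ - B ^ 2 / (2 * ρ₂)) = b * E₂ - b * B ^ 2 / (2 * ρ₂) := by ring
    nlinarith [key, h1, h2]
end

section
/- For every fixed γ > 1, the mathematical entropy η(u) = −ρ·log(p(u)/ρ^γ)/(γ−1), where p(u) = (γ−1)(E − ‖m‖²/(2ρ)), is a convex function on the admissible set A. -/
/-- The admissible set `A = {u | ρ > 0 ∧ ρe(u) > 0}`. -/
noncomputable def admissibleSet : Set State :=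
  {u | 0 < u.1 ∧ 0 < internalEnergy u}

/-- The pressure `p(u) = (γ - 1) ρe(u)`. -/
noncomputable def pressure (γ : ℝ) (u : State) : ℝ :=
  (γ - 1) * internalEnergy u

/-- The mathematical entropy `η(u) = -ρ s(u) / (γ - 1)`, where
`s(u) = log (p(u) / ρ^γ)` is the physical entropy. -/
noncomputable def mathEntropy (γ : ℝ) (u : State) : ℝ :=
  -(u.1 * Real.log (pressure γ u / u.1 ^ γ)) / (γ - 1)

/-!
On the admissible set, `η(u) = ψ(ρ, ρe(u))` with
`ψ(ρ, ε) = ρ log ρ + (γ - 1)⁻¹ ρ (-log (ε / ρ)) - (log (γ - 1) / (γ - 1)) ρ`.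
The middle term is the perspective of the convex function `-log`, so `ψ` is jointly convex, and
`ψ` is decreasing in `ε`. The internal energy `E - ‖m‖² / (2ρ)` is concave, because `‖m‖² / ρ` is
the perspective of `‖·‖²`. A convex function that is decreasing in its second argument, composed
with a linear map in the first and a concave function in the second, is convex.
-/

open Set Real

section

variable {E F : Type*} [AddCommGroup E] [Module ℝ E] [AddCommGroup F] [Module ℝ F]

theorem ConvexOn.perspective {s : Set E} {f : E → ℝ} (hf : ConvexOn ℝ s f) :
    ConvexOn ℝ {p : ℝ × E | 0 < p.1 ∧ p.1⁻¹ • p.2 ∈ s} fun p => p.1 * f (p.1⁻¹ • p.2) := by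
  -- the perspective point of `a (r, x) + b (q, y)` is the convex combination of those of
  -- `(r, x)` and `(q, y)` with weights `a r / t` and `b q / t`, where `t = a r + b q`
  have key : ∀ ⦃r q : ℝ⦄ (x y : E), 0 < r → 0 < q → ∀ ⦃a b : ℝ⦄, 0 ≤ a → 0 ≤ b → a + b = 1 →
      0 < a * r + b * q ∧
      (a * r + b * q)⁻¹ • (a • x + b • y) =
        (a * r / (a * r + b * q)) • (r⁻¹ • x) + (b * q / (a * r + b * q)) • (q⁻¹ • y) ∧
      a * r / (a * r + b * q) + b * q / (a * r + b * q) = 1 := by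
    intro r q x y hr hq a b ha hb hab
    have ht : 0 < a * r + b * q := convex_Ioi (0 : ℝ) hr hq ha hb hab
    refine ⟨ht, ?_, by field_simp⟩
    simp only [smul_smul, smul_add]
    congr 2 <;> field_simp
  refine ⟨?_, ?_⟩ <;> rintro ⟨r, x⟩ ⟨hr, hx⟩ ⟨q, y⟩ ⟨hq, hy⟩ a b ha hb hab <;>
    obtain ⟨ht, hcomb, hsum⟩ := key x y hr hq ha hb hab <;>
    simp only [mem_ofPred_eq, Prod.fst_add, Prod.snd_add, Prod.smul_fst, Prod.smul_snd,
      smul_eq_mul] <;>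
    rw [hcomb]
  · exact ⟨ht, hf.1 hx hy (by positivity) (by positivity) hsum⟩
  · set t := a * r + b * q
    calc _ ≤ t * ((a * r / t) • f (r⁻¹ • x) + (b * q / t) • f (q⁻¹ • y)) := by
          gcongr
          exact hf.2 hx hy (by positivity) (by positivity) hsum
      _ = a * (r * f (r⁻¹ • x)) + b * (q * f (q⁻¹ • y)) := by
          simp only [smul_eq_mul]
          field_simp

theorem ConvexOn.comp_linearMap_prod_concaveOn {t : Set (F × ℝ)} {φ : F × ℝ → ℝ} {s : Set E}
    {ℓ : E →ₗ[ℝ] F} {g : E → ℝ} (hφ : ConvexOn ℝ t φ) (hg : ConcaveOn ℝ s g)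
    (hmaps : ∀ x ∈ s, (ℓ x, g x) ∈ t)
    (hanti : ∀ ⦃z y y'⦄, (z, y) ∈ t → (z, y') ∈ t → y ≤ y' → φ (z, y') ≤ φ (z, y)) :
    ConvexOn ℝ s fun x => φ (ℓ x, g x) := by
  refine ⟨hg.1, fun x hx y hy a b ha hb hab => ?_⟩
  have hcomb : a • (ℓ x, g x) + b • (ℓ y, g y) = (ℓ (a • x + b • y), a • g x + b • g y) := by
    simp
  have hmem : (ℓ (a • x + b • y), a • g x + b • g y) ∈ t :=
    hcomb ▸ hφ.1 (hmaps x hx) (hmaps y hy) ha hb hab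
  calc φ (ℓ (a • x + b • y), g (a • x + b • y))
      ≤ φ (ℓ (a • x + b • y), a • g x + b • g y) :=
        hanti hmem (hmaps _ (hg.1 hx hy ha hb hab)) (hg.2 hx hy ha hb hab)
    _ = φ (a • (ℓ x, g x) + b • (ℓ y, g y)) := by rw [hcomb]
    _ ≤ a • φ (ℓ x, g x) + b • φ (ℓ y, g y) := hφ.2 (hmaps x hx) (hmaps y hy) ha hb hab

end

theorem convexOn_norm_sq_div {E : Type*} [SeminormedAddCommGroup E] [NormedSpace ℝ E] :
    ConvexOn ℝ {p : ℝ × E | 0 < p.1} fun p => ‖p.2‖ ^ 2 / p.1 := by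
  have hsq : ConvexOn ℝ univ fun x : E => ‖x‖ ^ 2 :=
    convexOn_univ_norm.pow (fun _ _ => norm_nonneg _) 2
  refine (hsq.perspective.subset (fun p hp => ⟨hp, mem_univ _⟩) ?_).congr ?_
  · exact convex_halfSpace_gt (LinearMap.fst ℝ ℝ E).isLinear 0
  · rintro ⟨r, x⟩ (hr : 0 < r)
    simp only [norm_smul, norm_inv, Real.norm_of_nonneg hr.le]
    field_simp

theorem concaveOn_internalEnergy : ConcaveOn ℝ {u : State | 0 < u.1} internalEnergy := by
  let L : State →ₗ[ℝ] ℝ × EuclideanSpace ℝ (Fin 2) :=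
    (LinearMap.fst ℝ ℝ _).prod ((LinearMap.fst ℝ _ ℝ).comp (LinearMap.snd ℝ ℝ _))
  have hkin : ConvexOn ℝ {u : State | 0 < u.1} fun u => ‖u.2.1‖ ^ 2 / u.1 :=
    (convexOn_norm_sq_div (E := EuclideanSpace ℝ (Fin 2))).comp_linearMap L
  have hE : ConcaveOn ℝ {u : State | 0 < u.1} fun u => u.2.2 :=
    ((LinearMap.snd ℝ _ ℝ).comp (LinearMap.snd ℝ ℝ _)).concaveOn hkin.1
  refine (hE.sub (hkin.smul (by norm_num : (0 : ℝ) ≤ 1 / 2))).congr fun u _ => ?_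
  simp only [internalEnergy, Pi.sub_apply, smul_eq_mul]
  ring

theorem convex_admissibleSet : Convex ℝ admissibleSet :=
  concaveOn_internalEnergy.convex_gt 0

noncomputable def reducedEntropy (γ : ℝ) (p : ℝ × ℝ) : ℝ :=
  -(p.1 * log ((γ - 1) * p.2 / p.1 ^ γ)) / (γ - 1)

theorem mathEntropy_eq_reducedEntropy (γ : ℝ) (u : State) :
    mathEntropy γ u = reducedEntropy γ (u.1, internalEnergy u) :=
  rfl

theorem reducedEntropy_antitone_snd {γ : ℝ} (hγ : 1 < γ) {ρ e e' : ℝ} (hρ : 0 < ρ)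
    (he : 0 < e) (hee' : e ≤ e') : reducedEntropy γ (ρ, e') ≤ reducedEntropy γ (ρ, e) := by
  have hγ' : 0 < γ - 1 := sub_pos.2 hγ
  have hlog : log ((γ - 1) * e / ρ ^ γ) ≤ log ((γ - 1) * e' / ρ ^ γ) :=
    log_le_log (by positivity) (by gcongr)
  unfold reducedEntropy
  gcongr

theorem convexOn_reducedEntropy {γ : ℝ} (hγ : 1 < γ) :
    ConvexOn ℝ (Ioi 0 ×ˢ Ioi 0) (reducedEntropy γ) := by
  have hγ' : 0 < γ - 1 := sub_pos.2 hγ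
  have hQ : Convex ℝ (Ioi (0 : ℝ) ×ˢ Ioi (0 : ℝ)) := (convex_Ioi 0).prod (convex_Ioi 0)
  have hmulLog : ConvexOn ℝ (Ioi 0 ×ˢ Ioi 0) fun p : ℝ × ℝ => p.1 * log p.1 :=
    (convexOn_mul_log.comp_linearMap (LinearMap.fst ℝ ℝ ℝ)).subset
      (fun p hp => show (0 : ℝ) ≤ p.1 from hp.1.le) hQ
  have hrelLog : ConvexOn ℝ (Ioi 0 ×ˢ Ioi 0) fun p : ℝ × ℝ => p.1 * -log (p.1⁻¹ • p.2) :=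
    strictConcaveOn_log_Ioi.concaveOn.neg.perspective.subset
      (fun p hp => ⟨hp.1, show (0 : ℝ) < p.1⁻¹ • p.2 from smul_pos (inv_pos.2 hp.1) hp.2⟩) hQ
  have hlin : ConcaveOn ℝ (Ioi 0 ×ˢ Ioi 0) fun p : ℝ × ℝ => (log (γ - 1) / (γ - 1)) * p.1 :=
    ((log (γ - 1) / (γ - 1)) • LinearMap.fst ℝ ℝ ℝ).concaveOn hQ
  refine ((hmulLog.add (hrelLog.smul (inv_nonneg.2 hγ'.le))).sub hlin).congr ?_
  rintro ⟨ρ, e⟩ ⟨hρ, he⟩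
  simp only [reducedEntropy, Pi.add_apply, Pi.sub_apply, smul_eq_mul]
  rw [log_div (mul_pos hγ' he).ne' (rpow_pos_of_pos hρ γ).ne', log_mul hγ'.ne' he.ne',
    log_rpow hρ, log_mul (inv_ne_zero hρ.ne') he.ne', log_inv]
  field_simp
  ring

/-- For every fixed `γ > 1`, the mathematical entropy is a convex function on
the admissible set. -/
theorem mathEntropy_convexOn (γ : ℝ) (hγ : 1 < γ) :
    ConvexOn ℝ admissibleSet (mathEntropy γ) := by
  have hconc : ConcaveOn ℝ admissibleSet internalEnergy :=
    concaveOn_internalEnergy.subset (fun _ hu => hu.1) convex_admissibleSet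
  refine ((convexOn_reducedEntropy hγ).comp_linearMap_prod_concaveOn (ℓ := LinearMap.fst ℝ ℝ _)
    hconc (fun _ hu => by exact hu) ?_).congr fun u _ => (mathEntropy_eq_reducedEntropy γ u).symm
  rintro ρ e e' ⟨hρ, he⟩ - hee'
  exact reducedEntropy_antitone_snd hγ hρ he hee'
end

section
/- Fix γ > 1. The mappings between conservative and entropy variables are mutually inverse on the admissible set: for every u = (ρ, m, E) ∈ A, letting v = (v₁, v₂, v₃, v₄) = v(u) with v₁ = (ρe·(γ+1−s) − E)/(ρe), v₂ = u₁/e, v₃ = u₂/e, v₄ = −1/e, and defining s̃(v) = γ − v₁ + (v₂² + v₃²)/(2v₄) and (ρe)(v) = ((γ−1)/(−v₄)^γ)^{1/(γ−1)} · exp(−s̃(v)/(γ−1)), one has u(v(u)) = u, where u(v) := (−(ρe)(v)·v₄, (ρe)(v)·v₂, (ρe)(v)·v₃, (ρe)(v)·(1 − (v₂² + v₃²)/(2v₄))). -/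
/-! With `ε = ρe(u)` the entropy variables are `v₂ = m₁/ε`, `v₃ = m₂/ε`, `v₄ = -ρ/ε`, so the
kinetic term `(v₂² + v₃²)/(2v₄) = -‖m‖²/(2ρε)` equals `1 - E/ε` and hence `s̃(v(u)) = s(u)`.
In `(ρe)(v(u))` the logarithm of `(γ-1)/(ρ/ε)^γ` exceeds `s(u)` by `(γ-1)·log ε`, so the
`1/(γ-1)`-th power and the exponential combine to `ε`; then `u(v(u)) = u` componentwise. -/

open Real

theorem internalEnergy_eq_sub_sq_add_sq (u : State) :
    internalEnergy u = u.2.2 - (u.2.1 0 ^ 2 + u.2.1 1 ^ 2) / (2 * u.1) := by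
  rw [internalEnergy, EuclideanSpace.real_norm_sq_eq, Fin.sum_univ_two]

theorem sq_add_sq_div_two_mul_neg_div_eq_one_sub_div (u : State) (hρ : u.1 ≠ 0)
    (hε : internalEnergy u ≠ 0) :
    ((u.2.1 0 / internalEnergy u) ^ 2 + (u.2.1 1 / internalEnergy u) ^ 2)
        / (2 * -(u.1 / internalEnergy u)) = 1 - u.2.2 / internalEnergy u := by
  have hkin : u.2.1 0 ^ 2 + u.2.1 1 ^ 2 = 2 * u.1 * (u.2.2 - internalEnergy u) := by
    rw [internalEnergy_eq_sub_sq_add_sq]; field_simp; ring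
  field_simp
  linear_combination -hkin

theorem rpow_one_div_sub_one_mul_exp_neg_log_div {γ c ρ ε : ℝ} (hγ : γ ≠ 1) (hc : 0 < c)
    (hρ : 0 < ρ) (hε : 0 < ε) :
    (c / (ρ / ε) ^ γ) ^ (1 / (γ - 1)) * exp (-(log (c * ε / ρ ^ γ) / (γ - 1))) = ε := by
  have hlog : log (c / (ρ / ε) ^ γ) - log (c * ε / ρ ^ γ) = (γ - 1) * log ε := by
    rw [log_div hc.ne' (by positivity), log_rpow (div_pos hρ hε), log_div hρ.ne' hε.ne',
      log_div (by positivity) (by positivity), log_mul hc.ne' hε.ne', log_rpow hρ]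
    ring
  calc _ = exp ((log (c / (ρ / ε) ^ γ) - log (c * ε / ρ ^ γ)) / (γ - 1)) := by
        rw [rpow_def_of_pos (by positivity), ← exp_add]
        ring_nf
    _ = ε := by rw [hlog, mul_div_cancel_left₀ _ (sub_ne_zero.2 hγ), exp_log hε]

/-- The conservative-to-entropy-variable map followed by the
entropy-to-conservative-variable map is the identity on the admissible set. -/
theorem conservative_entropy_roundtrip (γ : ℝ) (hγ : 1 < γ) (u : State)
    (hu : u ∈ admissibleSet) :
    let ρ := u.1
    let m := u.2.1
    let E := u.2.2
    -- specific internal energy, physical entropy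
    let e := internalEnergy u / ρ
    let s := Real.log ((γ - 1) * internalEnergy u / ρ ^ γ)
    -- entropy variables v(u)
    let v₁ := (internalEnergy u * (γ + 1 - s) - E) / internalEnergy u
    let v₂ := (m 0 / ρ) / e
    let v₃ := (m 1 / ρ) / e
    let v₄ := -(1 / e)
    -- physical entropy and internal energy expressed in entropy variables
    let s' := γ - v₁ + (v₂ ^ 2 + v₃ ^ 2) / (2 * v₄)
    let ρe' := ((γ - 1) / (-v₄) ^ γ) ^ (1 / (γ - 1)) * Real.exp (-(s' / (γ - 1)))
    -- the conservative variables recovered from the entropy variables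
    ((-(ρe' * v₄), (WithLp.equiv 2 (Fin 2 → ℝ)).symm ![ρe' * v₂, ρe' * v₃],
      ρe' * (1 - (v₂ ^ 2 + v₃ ^ 2) / (2 * v₄))) : State) = u := by
  obtain ⟨hρ, hε⟩ := hu
  intro ρ m E e s v₁ v₂ v₃ v₄ s' ρe'
  set ε := internalEnergy u
  have hv₂ : v₂ = m 0 / ε := div_div_div_cancel_right₀ hρ.ne' _ _
  have hv₃ : v₃ = m 1 / ε := div_div_div_cancel_right₀ hρ.ne' _ _
  have hv₄ : v₄ = -(ρ / ε) := congrArg Neg.neg (one_div_div ε ρ)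
  have hkin : (v₂ ^ 2 + v₃ ^ 2) / (2 * v₄) = 1 - E / ε := by
    rw [hv₂, hv₃, hv₄, sq_add_sq_div_two_mul_neg_div_eq_one_sub_div u hρ.ne' hε.ne']
  have hs' : s' = s := by
    change γ - (ε * (γ + 1 - s) - E) / ε + (v₂ ^ 2 + v₃ ^ 2) / (2 * v₄) = s
    rw [hkin]; field_simp; ring
  have hρe' : ρe' = ε := by
    change ((γ - 1) / (-v₄) ^ γ) ^ (1 / (γ - 1)) * exp (-(s' / (γ - 1))) = ε
    rw [hs', hv₄, neg_neg]
    exact rpow_one_div_sub_one_mul_exp_neg_log_div hγ.ne' (sub_pos.2 hγ) hρ hε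
  refine Prod.ext ?_ (Prod.ext ?_ ?_)
  · change -(ρe' * v₄) = ρ
    rw [hρe', hv₄]; field_simp
  · ext i
    fin_cases i <;> simp [hρe', hv₂, hv₃, mul_div_cancel₀ _ hε.ne', m]
  · change ρe' * (1 - (v₂ ^ 2 + v₃ ^ 2) / (2 * v₄)) = E
    rw [hρe', hkin]; field_simp; ring
end

section
/- Fix γ > 1, let u = (ρ, m, E) ∈ A with velocity v = m/ρ, specific internal energy e = ρe(u)/ρ, and pressure p = (γ−1)ρe(u); let n ∈ ℝ² be a unit vector and let (s, r) ∈ ℝ² × ℝ encode the normal viscous flux data. If the real number β satisfies β > |v·n| + (1/(2ρ²e))·(√(ρ²r² + 2ρ²e·‖s − p·n‖²) + ρ|r|), then both states β·u + F(u, s, r, n) and β·u − F(u, s, r, n) lie in the admissible set A (i.e., have positive density and positive internal energy), where F(u, s, r, n) := (ρ(v·n), (v·n)·m + p·n − s, (E+p)(v·n) − v·s + r) is the normal inviscid-minus-viscous flux. -/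
open scoped RealInnerProductSpace

/-- The combined normal (inviscid minus viscous) flux
`F(u, s, r, n) = (ρ(v·n), (v·n)m + p·n - s, (E+p)(v·n) - v·s + r)`, where the
viscous data `(s, r)` encodes the normal viscous stress `n·τ` and the normal
heat/work flux `q·n`. -/
noncomputable def normalFlux (γ : ℝ) (u : State) (s : EuclideanSpace ℝ (Fin 2))
    (r : ℝ) (n : EuclideanSpace ℝ (Fin 2)) : State :=
  let ρ := u.1
  let m := u.2.1
  let E := u.2.2
  let v := ρ⁻¹ • m
  let p := (γ - 1) * internalEnergy u
  (ρ * ⟪v, n⟫, ⟪v, n⟫ • m + p • n - s, (E + p) * ⟪v, n⟫ - ⟪v, s⟫ + r)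

/-- Positivity of the quadratic-in-`c` expression beyond its positive root. -/
lemma pos_aux (ρ ie K r c D : ℝ) (hρ : 0 < ρ) (hie : 0 < ie)
    (hD : 0 ≤ D) (hD2 : D ^ 2 = ρ ^ 2 * r ^ 2 + 2 * ρ * ie * K)
    (hc : (D + ρ * |r|) / (2 * ρ * ie) < c) :
    0 < c * ie + r - K / (2 * ρ * c) := by
  have hc0 : 0 < c := lt_of_le_of_lt (by positivity) hc
  have h1 : D + ρ * |r| < c * (2 * ρ * ie) := (div_lt_iff₀ (by positivity)).mp hc
  have hr : -r ≤ |r| := neg_le_abs r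
  have h2 : D < 2 * ρ * ie * c + ρ * r := by nlinarith
  have h3 : D ^ 2 < (2 * ρ * ie * c + ρ * r) ^ 2 := by nlinarith
  rw [sub_pos, div_lt_iff₀ (by positivity)]
  nlinarith [mul_pos hρ hie]

/-- Scalar form of the internal-energy identity. -/
lemma ie_scalar (ρ E N K p β r ε a b c : ℝ) (hρ0 : ρ ≠ 0) (hc0 : c ≠ 0)
    (hcc : c = β + ε * a) (hε2 : ε ^ 2 = 1) :
    β * E + ε * ((E + p) * a - b + r) -
      (c ^ 2 * N - 2 * (c * (ε * (ρ * b - p * (ρ * a)))) + ε ^ 2 * K)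
        / (2 * (ρ * c))
    = c * (E - N / (2 * ρ)) + ε * r - K / (2 * ρ * c) := by
  rw [hε2]
  subst hcc
  field_simp
  ring

/-- Norm expansion for `‖c • m - ε • w‖²`. -/
lemma norm_expand (c ε : ℝ) (m w : EuclideanSpace ℝ (Fin 2)) :
    ‖c • m - ε • w‖ ^ 2
      = c ^ 2 * ‖m‖ ^ 2 - 2 * (c * (ε * ⟪m, w⟫)) + ε ^ 2 * ‖w‖ ^ 2 := by
  rw [norm_sub_sq_real, real_inner_smul_left, real_inner_smul_right, norm_smul, norm_smul,
    mul_pow, mul_pow, Real.norm_eq_abs, Real.norm_eq_abs, sq_abs, sq_abs]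

/-- Main auxiliary lemma: with a sign `ε = ±1`, the state `β u + ε F` is admissible. -/
lemma main_aux (γ : ℝ) (u : State)
    (hu : u ∈ admissibleSet) (s : EuclideanSpace ℝ (Fin 2)) (r : ℝ)
    (n : EuclideanSpace ℝ (Fin 2)) (β ε : ℝ) (hε : ε = 1 ∨ ε = -1)
    (hβ :
      let ρ := u.1
      let v := ρ⁻¹ • u.2.1
      let e := internalEnergy u / ρ
      let p := (γ - 1) * internalEnergy u
      |⟪v, n⟫| + (1 / (2 * ρ ^ 2 * e)) *
          (Real.sqrt (ρ ^ 2 * r ^ 2 + 2 * ρ ^ 2 * e * ‖s - p • n‖ ^ 2) + ρ * |r|)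
        < β) :
    β • u + ε • normalFlux γ u s r n ∈ admissibleSet := by
  obtain ⟨hρ, hie⟩ := hu
  have hρ0 : u.1 ≠ 0 := ne_of_gt hρ
  set ρ := u.1 with hρdef
  set m := u.2.1 with hmdef
  set E := u.2.2 with hEdef
  set ie := internalEnergy u with hiedef
  set p := (γ - 1) * ie with hpdef
  set K := ‖s - p • n‖ ^ 2 with hKdef
  have hK0 : (0:ℝ) ≤ K := by positivity
  set a := ρ⁻¹ * ⟪m, n⟫ with hadef
  set b := ρ⁻¹ * ⟪m, s⟫ with hbdef
  have hvn : ⟪(ρ⁻¹ : ℝ) • m, n⟫ = a := real_inner_smul_left m n ρ⁻¹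
  have hvs : ⟪(ρ⁻¹ : ℝ) • m, s⟫ = b := real_inner_smul_left m s ρ⁻¹
  have hmn : ⟪m, n⟫ = ρ * a := by rw [hadef]; field_simp
  have hms : ⟪m, s⟫ = ρ * b := by rw [hbdef]; field_simp
  have hre : 2 * ρ ^ 2 * (ie / ρ) = 2 * ρ * ie := by field_simp
  have hβ' : |a| + (1 / (2 * ρ * ie)) *
      (Real.sqrt (ρ ^ 2 * r ^ 2 + 2 * ρ * ie * K) + ρ * |r|) < β := by
    have h := hβ
    simp only [hvn] at h
    rwa [hre] at h
  set D := Real.sqrt (ρ ^ 2 * r ^ 2 + 2 * ρ * ie * K) with hDdef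
  have hD0 : 0 ≤ D := Real.sqrt_nonneg _
  have hD2 : D ^ 2 = ρ ^ 2 * r ^ 2 + 2 * ρ * ie * K := by
    rw [hDdef, Real.sq_sqrt (by positivity)]
  have hb : (D + ρ * |r|) / (2 * ρ * ie) < β - |a| := by
    have h : 1 / (2 * ρ * ie) * (D + ρ * |r|) = (D + ρ * |r|) / (2 * ρ * ie) := by ring
    linarith [hβ', h ▸ hβ']
  have hεa : -|a| ≤ ε * a := by
    rcases hε with h | h <;> subst h
    · simpa using neg_abs_le a
    · simpa using le_abs_self a
  have hε2 : ε ^ 2 = 1 := by rcases hε with h | h <;> subst h <;> norm_num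
  set c := β + ε * a with hcdef
  have hclb : (D + ρ * |r|) / (2 * ρ * ie) < c := by
    have : β - |a| ≤ c := by rw [hcdef]; linarith
    linarith
  have hc : 0 < c := lt_of_le_of_lt (by positivity) hclb
  have hc0 : c ≠ 0 := ne_of_gt hc
  have hsum : β • u + ε • normalFlux γ u s r n
      = (ρ * c, c • m - ε • (s - p • n), β * E + ε * ((E + p) * a - b + r)) := by
    refine Prod.ext ?_ (Prod.ext ?_ ?_)
    · show β * ρ + ε * (ρ * ⟪(ρ⁻¹ : ℝ) • m, n⟫) = ρ * c
      rw [hvn, hcdef]; ring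
    · show β • m + ε • (⟪(ρ⁻¹ : ℝ) • m, n⟫ • m + p • n - s) = c • m - ε • (s - p • n)
      rw [hvn, hcdef]; module
    · show β * E + ε * ((E + p) * ⟪(ρ⁻¹ : ℝ) • m, n⟫ - ⟪(ρ⁻¹ : ℝ) • m, s⟫ + r)
          = β * E + ε * ((E + p) * a - b + r)
      rw [hvn, hvs]
  have hiefml : internalEnergy (β • u + ε • normalFlux γ u s r n)
      = c * ie + ε * r - K / (2 * ρ * c) := by
    rw [hsum]
    show β * E + ε * ((E + p) * a - b + r)
        - ‖c • m - ε • (s - p • n)‖ ^ 2 / (2 * (ρ * c))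
      = c * ie + ε * r - K / (2 * ρ * c)
    rw [norm_expand, inner_sub_right, real_inner_smul_right, hmn, hms, ← hKdef]
    have : ie = E - ‖m‖ ^ 2 / (2 * ρ) := rfl
    rw [this]
    exact ie_scalar ρ E (‖m‖ ^ 2) K p β r ε a b c hρ0 hc0 hcdef hε2
  constructor
  · show 0 < (β • u + ε • normalFlux γ u s r n).1
    rw [hsum]
    exact mul_pos hρ hc
  · show 0 < internalEnergy (β • u + ε • normalFlux γ u s r n)
    rw [hiefml]
    have habs : |ε * r| = |r| := by rcases hε with h | h <;> subst h <;> simp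
    have hD2' : D ^ 2 = ρ ^ 2 * (ε * r) ^ 2 + 2 * ρ * ie * K := by
      rw [hD2, mul_pow, hε2]; ring
    have hclb' : (D + ρ * |ε * r|) / (2 * ρ * ie) < c := by rwa [habs]
    exact pos_aux ρ ie K (ε * r) c D hρ hie hD0 hD2' hclb'

/-- If `β` exceeds the bound
`|v·n| + (1/(2ρ²e)) (√(ρ²r² + 2ρ²e‖s - p n‖²) + ρ|r|)`, then both
`β u + F(u,s,r,n)` and `β u - F(u,s,r,n)` are admissible. -/
theorem beta_state_pm_flux_admissible (γ : ℝ) (hγ : 1 < γ) (u : State)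
    (hu : u ∈ admissibleSet) (s : EuclideanSpace ℝ (Fin 2)) (r : ℝ)
    (n : EuclideanSpace ℝ (Fin 2)) (hn : ‖n‖ = 1) (β : ℝ)
    (hβ :
      let ρ := u.1
      let v := ρ⁻¹ • u.2.1
      let e := internalEnergy u / ρ
      let p := (γ - 1) * internalEnergy u
      |⟪v, n⟫| + (1 / (2 * ρ ^ 2 * e)) *
          (Real.sqrt (ρ ^ 2 * r ^ 2 + 2 * ρ ^ 2 * e * ‖s - p • n‖ ^ 2) + ρ * |r|)
        < β) :
    β • u + normalFlux γ u s r n ∈ admissibleSet ∧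
    β • u - normalFlux γ u s r n ∈ admissibleSet := by
  constructor
  · have h := main_aux γ u hu s r n β 1 (Or.inl rfl) hβ
    rwa [one_smul] at h
  · have h := main_aux γ u hu s r n β (-1) (Or.inr rfl) hβ
    rwa [neg_one_smul, ← sub_eq_add_neg] at h
end

section
/- (Lemma 1, intermediate state admissibility.) Fix γ > 1 and ε₀ > 0. Let u_L, u_R ∈ A, let n ∈ ℝ² be a unit vector, and let (s_L, r_L), (s_R, r_R) ∈ ℝ² × ℝ be viscous flux data for the two states. Define, for a state u with density ρ, velocity v, specific internal energy e, and pressure p, the coefficient β(u, s, r, n) := ε₀ + |v·n| + (1/(2ρ²e))·(√(ρ²r² + 2ρ²e·‖s − p·n‖²) + ρ|r|), and set β_{LR} := max(β(u_L, s_L, r_L, n), β(u_R, s_R, r_R, n)). Then the intermediate state ū := (u_L + u_R)/2 − (1/(2β_{LR}))·(F(u_R, s_R, r_R, n) − F(u_L, s_L, r_L, n)) lies in the admissible set A, where F(u, s, r, n) := (ρ(v·n), (v·n)·m + p·n − s, (E+p)(v·n) − v·s + r). -/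
open scoped RealInnerProductSpace

/-- The graph-viscosity coefficient
`β(u,s,r,n) = ε₀ + |v·n| + (1/(2ρ²e))(√(ρ²r² + 2ρ²e‖s - p n‖²) + ρ|r|)`. -/
noncomputable def betaCoeff (γ ε₀ : ℝ) (u : State) (s : EuclideanSpace ℝ (Fin 2))
    (r : ℝ) (n : EuclideanSpace ℝ (Fin 2)) : ℝ :=
  let ρ := u.1
  let v := ρ⁻¹ • u.2.1
  let e := internalEnergy u / ρ
  let p := (γ - 1) * internalEnergy u
  ε₀ + |⟪v, n⟫| + (1 / (2 * ρ ^ 2 * e)) *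
    (Real.sqrt (ρ ^ 2 * r ^ 2 + 2 * ρ ^ 2 * e * ‖s - p • n‖ ^ 2) + ρ * |r|)

lemma key_identity {V : Type*} [NormedAddCommGroup V] [InnerProductSpace ℝ V]
    (m n s : V) (ρ E p r β x : ℝ) (hρ : ρ ≠ 0) (hβ : β ≠ 0)
    (hx : x = ⟪(ρ⁻¹ • m : V), n⟫) :
    β ^ 2 * ((E - β⁻¹ * ((E + p) * x - ⟪(ρ⁻¹ • m : V), s⟫ + r)) *
        (2 * (ρ - β⁻¹ * (ρ * x)))
        - ‖m - β⁻¹ • (x • m + p • n - s)‖ ^ 2)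
      = 2 * ρ * (E - ‖m‖ ^ 2 / (2 * ρ)) * (β - x) ^ 2 - 2 * ρ * r * (β - x)
        - ‖s - p • n‖ ^ 2 := by
  subst hx
  simp only [← real_inner_self_eq_norm_sq, inner_sub_left, inner_sub_right, inner_add_left,
    inner_add_right, real_inner_smul_left, real_inner_smul_right]
  rw [real_inner_comm n m, real_inner_comm s m, real_inner_comm s n]
  field_simp
  ring

lemma betaCoeff_pos (γ ε₀ : ℝ) (hε : 0 < ε₀) (u : State) (hu : u ∈ admissibleSet)
    (s : EuclideanSpace ℝ (Fin 2)) (r : ℝ) (n : EuclideanSpace ℝ (Fin 2)) :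
    0 < betaCoeff γ ε₀ u s r n := by
  obtain ⟨hρ, hie⟩ := hu
  simp only [betaCoeff]
  have he : 0 < internalEnergy u / u.1 := div_pos hie hρ
  have hd : (0:ℝ) < 2 * u.1 ^ 2 * (internalEnergy u / u.1) := by
    have h1 : (0:ℝ) < u.1 ^ 2 := by positivity
    nlinarith
  have h3 : 0 ≤ 1 / (2 * u.1 ^ 2 * (internalEnergy u / u.1)) *
      (Real.sqrt (u.1 ^ 2 * r ^ 2 + 2 * u.1 ^ 2 * (internalEnergy u / u.1) *
        ‖s - ((γ - 1) * internalEnergy u) • n‖ ^ 2) + u.1 * |r|) :=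
    mul_nonneg (one_div_nonneg.mpr hd.le) (add_nonneg (Real.sqrt_nonneg _)
      (mul_nonneg hρ.le (abs_nonneg r)))
  have h4 := abs_nonneg (⟪(u.1⁻¹ • u.2.1 : EuclideanSpace ℝ (Fin 2)), n⟫ : ℝ)
  linarith

set_option maxHeartbeats 1000000 in
lemma minus_admissible (γ ε₀ : ℝ) (hε : 0 < ε₀)
    (u : State) (hu : u ∈ admissibleSet)
    (s : EuclideanSpace ℝ (Fin 2)) (r : ℝ) (n : EuclideanSpace ℝ (Fin 2))
    (β : ℝ) (hβ : betaCoeff γ ε₀ u s r n ≤ β) :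
    u - β⁻¹ • normalFlux γ u s r n ∈ admissibleSet := by
  obtain ⟨ρ, m, E⟩ := u
  obtain ⟨hρ, hεu0⟩ := hu
  simp only at hρ
  obtain ⟨εu, hεudef⟩ : ∃ a : ℝ, internalEnergy (ρ, m, E) = a := ⟨_, rfl⟩
  rw [hεudef] at hεu0
  have hεu' : εu = E - ‖m‖ ^ 2 / (2 * ρ) := by rw [← hεudef]; rfl
  obtain ⟨x, hxdef⟩ : ∃ a : ℝ, (⟪(ρ⁻¹ • m : EuclideanSpace ℝ (Fin 2)), n⟫ : ℝ) = a := ⟨_, rfl⟩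
  obtain ⟨p, hpdef⟩ : ∃ a : ℝ, (γ - 1) * εu = a := ⟨_, rfl⟩
  obtain ⟨W, hWdef⟩ : ∃ a : ℝ, ‖s - p • n‖ = a := ⟨_, rfl⟩
  simp only [betaCoeff, hεudef, hpdef, hxdef, hWdef] at hβ
  have e1 : 2 * ρ ^ 2 * (εu / ρ) = 2 * ρ * εu := by field_simp
  rw [e1] at hβ
  -- hβ : ε₀ + |x| + 1 / (2*ρ*εu) * (√(ρ^2*r^2 + 2*ρ*εu*W^2) + ρ*|r|) ≤ β
  obtain ⟨S, hSdef⟩ : ∃ a : ℝ, Real.sqrt (ρ ^ 2 * r ^ 2 + 2 * ρ * εu * W ^ 2) = a := ⟨_, rfl⟩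
  rw [hSdef] at hβ
  have hSnn : 0 ≤ S := hSdef ▸ Real.sqrt_nonneg _
  have hS2 : S ^ 2 = ρ ^ 2 * r ^ 2 + 2 * ρ * εu * W ^ 2 := by
    rw [← hSdef]; exact Real.sq_sqrt (by positivity)
  have hfrac : 0 ≤ 1 / (2 * ρ * εu) * (S + ρ * |r|) := by positivity
  have hβpos : 0 < β := by have := abs_nonneg x; linarith
  have ht : ε₀ + 1 / (2 * ρ * εu) * (S + ρ * |r|) ≤ β - x := by
    have := le_abs_self x; linarith
  have htpos : 0 < β - x := lt_of_lt_of_le (by positivity) ht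
  have hD : (0:ℝ) < 2 * ρ * εu := by positivity
  have hDt : 2 * ρ * εu * ε₀ + (S + ρ * |r|) ≤ 2 * ρ * εu * (β - x) := by
    have h := mul_le_mul_of_nonneg_left ht hD.le
    have h2 : 2 * ρ * εu * (1 / (2 * ρ * εu) * (S + ρ * |r|)) = S + ρ * |r| := by
      field_simp
    nlinarith [h, h2]
  have hrr : ρ * r ≤ ρ * |r| := mul_le_mul_of_nonneg_left (le_abs_self r) hρ.le
  have h1 : 0 < 2 * ρ * εu * (β - x) - ρ * r - S := by nlinarith
  have h2 : 0 < 2 * ρ * εu * (β - x) - ρ * r + S := by nlinarith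
  have hfac : (2 * ρ * εu) * (2 * ρ * εu * (β - x) ^ 2 - 2 * ρ * r * (β - x) - W ^ 2)
      = (2 * ρ * εu * (β - x) - ρ * r - S) * (2 * ρ * εu * (β - x) - ρ * r + S) := by
    linear_combination hS2
  have hq : 0 < 2 * ρ * εu * (β - x) ^ 2 - 2 * ρ * r * (β - x) - W ^ 2 := by
    nlinarith [mul_pos h1 h2, hfac, hD]
  -- unfold the flux and the state
  have hflux : normalFlux γ (ρ, m, E) s r n
      = (ρ * x, x • m + p • n - s,
         (E + p) * x - ⟪(ρ⁻¹ • m : EuclideanSpace ℝ (Fin 2)), s⟫ + r) := by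
    simp only [normalFlux, hεudef, hpdef, hxdef]
  rw [hflux]
  have hcomp : ((ρ, m, E) : State) - β⁻¹ • ((ρ * x, x • m + p • n - s,
        (E + p) * x - ⟪(ρ⁻¹ • m : EuclideanSpace ℝ (Fin 2)), s⟫ + r) : State)
      = (ρ - β⁻¹ * (ρ * x), m - β⁻¹ • (x • m + p • n - s),
        E - β⁻¹ * ((E + p) * x - ⟪(ρ⁻¹ • m : EuclideanSpace ℝ (Fin 2)), s⟫ + r)) := by
    simp only [Prod.smul_mk, Prod.mk_sub_mk, smul_eq_mul]
  rw [hcomp]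
  have hρt : ρ - β⁻¹ * (ρ * x) = ρ * (β - x) / β := by field_simp
  have hρtpos : (0:ℝ) < ρ - β⁻¹ * (ρ * x) := by rw [hρt]; positivity
  refine ⟨hρtpos, ?_⟩
  show 0 < internalEnergy _
  have hie : internalEnergy (ρ - β⁻¹ * (ρ * x), m - β⁻¹ • (x • m + p • n - s),
        E - β⁻¹ * ((E + p) * x - ⟪(ρ⁻¹ • m : EuclideanSpace ℝ (Fin 2)), s⟫ + r))
      = (E - β⁻¹ * ((E + p) * x - ⟪(ρ⁻¹ • m : EuclideanSpace ℝ (Fin 2)), s⟫ + r))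
        - ‖m - β⁻¹ • (x • m + p • n - s)‖ ^ 2 / (2 * (ρ - β⁻¹ * (ρ * x))) := rfl
  rw [hie, sub_pos, div_lt_iff₀ (by positivity)]
  have hid := key_identity m n s ρ E p r β x hρ.ne' hβpos.ne' hxdef.symm
  rw [← hεu', hWdef] at hid
  nlinarith [hid, hq, pow_pos hβpos 2]

lemma plus_admissible (γ ε₀ : ℝ) (hε : 0 < ε₀)
    (u : State) (hu : u ∈ admissibleSet)
    (s : EuclideanSpace ℝ (Fin 2)) (r : ℝ) (n : EuclideanSpace ℝ (Fin 2))
    (β : ℝ) (hβ : betaCoeff γ ε₀ u s r n ≤ β) :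
    u + β⁻¹ • normalFlux γ u s r n ∈ admissibleSet := by
  have hnegF : normalFlux γ u (-s) (-r) (-n) = - normalFlux γ u s r n := by
    simp only [normalFlux, Prod.neg_mk, Prod.mk.injEq]
    refine ⟨by simp only [inner_neg_right]; ring, ?_, by simp only [inner_neg_right]; ring⟩
    simp only [inner_neg_right, neg_smul, smul_neg]
    module
  have hnegβ : betaCoeff γ ε₀ u (-s) (-r) (-n) = betaCoeff γ ε₀ u s r n := by
    simp only [betaCoeff]
    have hw : (-s - ((γ - 1) * internalEnergy u) • (-n) : EuclideanSpace ℝ (Fin 2))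
        = -(s - ((γ - 1) * internalEnergy u) • n) := by module
    rw [hw, norm_neg, inner_neg_right, abs_neg, neg_sq]
    simp only [abs_neg]
  have h := minus_admissible γ ε₀ hε u hu (-s) (-r) (-n) β (by rw [hnegβ]; exact hβ)
  rw [hnegF, smul_neg, sub_neg_eq_add] at h
  exact h

lemma midpoint_admissible (u1 u2 : State) (h1 : u1 ∈ admissibleSet)
    (h2 : u2 ∈ admissibleSet) : (2:ℝ)⁻¹ • (u1 + u2) ∈ admissibleSet := by
  obtain ⟨ρ1, m1, E1⟩ := u1
  obtain ⟨ρ2, m2, E2⟩ := u2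
  obtain ⟨hρ1, hie1⟩ := h1
  obtain ⟨hρ2, hie2⟩ := h2
  simp only at hρ1 hρ2
  have hie1' : internalEnergy (ρ1, m1, E1) = E1 - ‖m1‖ ^ 2 / (2 * ρ1) := rfl
  have hie2' : internalEnergy (ρ2, m2, E2) = E2 - ‖m2‖ ^ 2 / (2 * ρ2) := rfl
  rw [hie1'] at hie1
  rw [hie2'] at hie2
  have hN1 : ‖m1‖ ^ 2 < 2 * ρ1 * E1 := by
    rw [sub_pos, div_lt_iff₀ (by positivity)] at hie1; linarith
  have hN2 : ‖m2‖ ^ 2 < 2 * ρ2 * E2 := by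
    rw [sub_pos, div_lt_iff₀ (by positivity)] at hie2; linarith
  have hcomp : ((2:ℝ)⁻¹ • ((ρ1, m1, E1) + (ρ2, m2, E2)) : State)
      = ((2:ℝ)⁻¹ * (ρ1 + ρ2), (2:ℝ)⁻¹ • (m1 + m2), (2:ℝ)⁻¹ * (E1 + E2)) := by
    simp only [Prod.mk_add_mk, Prod.smul_mk, smul_eq_mul]
  rw [hcomp]
  have hρ : (0:ℝ) < (2:ℝ)⁻¹ * (ρ1 + ρ2) := by positivity
  refine ⟨hρ, ?_⟩
  show 0 < internalEnergy _
  have hie : internalEnergy ((2:ℝ)⁻¹ * (ρ1 + ρ2), (2:ℝ)⁻¹ • (m1 + m2), (2:ℝ)⁻¹ * (E1 + E2))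
      = (2:ℝ)⁻¹ * (E1 + E2) - ‖(2:ℝ)⁻¹ • (m1 + m2)‖ ^ 2 / (2 * ((2:ℝ)⁻¹ * (ρ1 + ρ2))) := rfl
  rw [hie, sub_pos, div_lt_iff₀ (by positivity)]
  have hnorm : ‖(2:ℝ)⁻¹ • (m1 + m2)‖ ^ 2 = (2:ℝ)⁻¹ ^ 2 * ‖m1 + m2‖ ^ 2 := by
    rw [norm_smul]; simp; ring
  rw [hnorm]
  have htri : ‖m1 + m2‖ ^ 2 ≤ (‖m1‖ + ‖m2‖) ^ 2 := by
    have := norm_add_le m1 m2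
    nlinarith [norm_nonneg (m1 + m2), norm_nonneg m1, norm_nonneg m2]
  have key : (‖m1‖ + ‖m2‖) ^ 2 < 2 * (ρ1 + ρ2) * (E1 + E2) := by
    have h3 : ρ2 * ‖m1‖ ^ 2 + ρ1 * ‖m2‖ ^ 2 < 2 * ρ1 * ρ2 * (E1 + E2) := by
      nlinarith [mul_lt_mul_of_pos_left hN1 hρ2, mul_lt_mul_of_pos_left hN2 hρ1]
    have h4 : ρ1 * ρ2 * (‖m1‖ + ‖m2‖) ^ 2 ≤ (ρ1 + ρ2) * (ρ2 * ‖m1‖ ^ 2 + ρ1 * ‖m2‖ ^ 2) := by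
      nlinarith [sq_nonneg (ρ2 * ‖m1‖ - ρ1 * ‖m2‖)]
    have h5 := mul_lt_mul_of_pos_left h3 (show (0:ℝ) < ρ1 + ρ2 by linarith)
    nlinarith [mul_pos hρ1 hρ2]
  nlinarith [htri, key]

/-- Lemma 1: for admissible states `u_L, u_R`, the intermediate state
`ū = (u_L + u_R)/2 - (1/(2β_{LR}))(F(u_R,·) - F(u_L,·))` is admissible,
where `β_{LR} = max(β_L, β_R)`. -/
theorem intermediate_state_admissible (γ ε₀ : ℝ) (hγ : 1 < γ) (hε : 0 < ε₀)
    (uL uR : State) (hL : uL ∈ admissibleSet) (hR : uR ∈ admissibleSet)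
    (n : EuclideanSpace ℝ (Fin 2)) (hn : ‖n‖ = 1)
    (sL sR : EuclideanSpace ℝ (Fin 2)) (rL rR : ℝ) :
    let βLR := max (betaCoeff γ ε₀ uL sL rL n) (betaCoeff γ ε₀ uR sR rR n)
    (2 : ℝ)⁻¹ • (uL + uR) -
        (1 / (2 * βLR)) • (normalFlux γ uR sR rR n - normalFlux γ uL sL rL n)
      ∈ admissibleSet := by
  intro βLR
  have hβL : betaCoeff γ ε₀ uL sL rL n ≤ βLR := le_max_left _ _
  have hβR : betaCoeff γ ε₀ uR sR rR n ≤ βLR := le_max_right _ _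
  have hβpos : 0 < βLR := lt_of_lt_of_le (betaCoeff_pos γ ε₀ hε uL hL sL rL n) hβL
  have hP := plus_admissible γ ε₀ hε uL hL sL rL n βLR hβL
  have hM := minus_admissible γ ε₀ hε uR hR sR rR n βLR hβR
  have hrw : (2 : ℝ)⁻¹ • (uL + uR) -
        (1 / (2 * βLR)) • (normalFlux γ uR sR rR n - normalFlux γ uL sL rL n)
      = (2:ℝ)⁻¹ • ((uL + βLR⁻¹ • normalFlux γ uL sL rL n)
          + (uR - βLR⁻¹ • normalFlux γ uR sR rR n)) := by
    match_scalars <;> field_simp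
  rw [hrw]
  exact midpoint_admissible _ _ hP hM
end

section
/- Let G be a finite simple graph on vertex set V with {0,1}-adjacency matrix A and graph Laplacian L = D − A (D the diagonal degree matrix). Let ψ : V → ℝ and let C be a symmetric V×V real matrix satisfying L·ψ = (1/2)·C·1, where 1 is the all-ones vector. Define the matrix Q by Q_{ij} := A_{ij}·(ψ_j − ψ_i) + (1/2)·C_{ij}. Then Q satisfies the summation-by-parts property Q + Qᵀ = C and the conservation property Q·1 = 0. -/
open Matrix

/-- Construction of sparse low order SBP operators: given a graph `G` with
adjacency matrix `A` and Laplacian `L`, a symmetric matrix `C`, and a potential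
`ψ` with `L ψ = ½ C 1`, the matrix `Q_{ij} = A_{ij}(ψ_j - ψ_i) + ½ C_{ij}`
satisfies the SBP property `Q + Qᵀ = C` and the conservation property `Q·1 = 0`. -/
theorem sparse_sbp_construction {V : Type*} [Fintype V] [DecidableEq V]
    (G : SimpleGraph V) [DecidableRel G.Adj] (ψ : V → ℝ) (C : Matrix V V ℝ)
    (hC : C.IsSymm)
    (hψ : G.lapMatrix ℝ *ᵥ ψ = (1 / 2 : ℝ) • (C *ᵥ (1 : V → ℝ))) :
    let Q : Matrix V V ℝ :=
      Matrix.of fun i j => G.adjMatrix ℝ i j * (ψ j - ψ i) + (1 / 2) * C i j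
    Q + Qᵀ = C ∧ Q *ᵥ (1 : V → ℝ) = 0 := by
  intro Q
  constructor
  · ext i j
    have hCij : C j i = C i j := by
      conv_lhs => rw [← hC]
      rfl
    have hA : G.adjMatrix ℝ j i = G.adjMatrix ℝ i j := by
      simp [SimpleGraph.adj_comm]
    simp only [Q, Matrix.add_apply, Matrix.transpose_apply, Matrix.of_apply, hCij, hA]
    ring
  · funext i
    have h1 := congrFun hψ i
    have hlap : (G.lapMatrix ℝ *ᵥ ψ) i = ∑ j, G.adjMatrix ℝ i j * (ψ i - ψ j) := by
      have h2 : ∑ j, G.adjMatrix ℝ i j * (ψ i - ψ j)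
          = (G.adjMatrix ℝ *ᵥ Function.const V (ψ i)) i - (G.adjMatrix ℝ *ᵥ ψ) i := by
        simp [Function.const, mulVec, dotProduct, mul_sub, Finset.sum_sub_distrib]
      rw [SimpleGraph.lapMatrix_mulVec_apply, h2,
        SimpleGraph.adjMatrix_mulVec_const_apply, SimpleGraph.adjMatrix_mulVec_apply]
    have hmv : (Q *ᵥ (1 : V → ℝ)) i
        = -(G.lapMatrix ℝ *ᵥ ψ) i + (1/2) * (C *ᵥ (1 : V → ℝ)) i := by
      rw [hlap]
      simp only [Q, mulVec, dotProduct, Matrix.of_apply, Pi.one_apply, mul_one,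
        Finset.sum_add_distrib, ← Finset.sum_neg_distrib, Finset.mul_sum]
      congr 1
      · congr 1; ext j; ring
    rw [hmv, h1]
    simp
end
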